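/- arXiv:2508.21683 — 4 statements merged into one kernel-verified Lean document; each statement's English description precedes it below -/
import Mathlib

section
/- For the classical Takagi function T = T_2, if x ∈ (0,1) is a dyadic rational, then the level set L(T(x)) = {t ∈ [0,1] : T(t) = T(x)} is infinite. -/
/-- Distance from `x` to the nearest integer. -/
noncomputable def distInt (x : ℝ) : ℝ := |x - round x|

/-- The classical Takagi function `T = T_2`. -/
noncomputable def takagi2 (x : ℝ) : ℝ :=
  ∑' n : ℕ, distInt ((2 : ℝ) ^ n * x) / (2 : ℝ) ^ n

/-!
Write `x = (a + 1/2) / 2ⁿ` with `a < 2ⁿ`. On `[0, 1]` the Takagi function satisfies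
`T (y/2) = y/2 + T y / 2` and `T ((1 + y)/2) = (1 - y)/2 + T y / 2`; iterating along the binary
digits of `a` gives an integer `s` with `T ((a + y)/2ⁿ) = T (a/2ⁿ) + (s y + T y)/2ⁿ` for
`y ∈ [0, 1]`. So it suffices that `s y + T y = (s + 1)/2`, the value at `y = 1/2`, has infinitely
many solutions in `[0, 1]`. For `s = -k ≤ 0` the points `(1 + u/2ᵏ)/2` with `T u = u` are
solutions, and `T` has the infinitely many fixed points `2/3 - 4⁻ⁿ/6`; for `s > 0` reflect the
solutions for `-s` through `T (1 - y) = T y`.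
-/

open Set

lemma distInt_nonneg (x : ℝ) : 0 ≤ distInt x := abs_nonneg _

lemma distInt_le_half (x : ℝ) : distInt x ≤ 1 / 2 := abs_sub_round x

lemma distInt_of_le_half {x : ℝ} (h0 : 0 ≤ x) (h1 : x ≤ 1 / 2) : distInt x = x := by
  rw [distInt, abs_sub_round_eq_min, Int.fract_eq_self.2 ⟨h0, by linarith⟩]
  exact min_eq_left (by linarith)

lemma distInt_of_half_le {x : ℝ} (h0 : 1 / 2 ≤ x) (h1 : x ≤ 1) : distInt x = 1 - x := by
  rcases h1.eq_or_lt with rfl | h1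
  · simp [distInt]
  · rw [distInt, abs_sub_round_eq_min, Int.fract_eq_self.2 ⟨by linarith, h1⟩]
    exact min_eq_right (by linarith)

lemma distInt_add_intCast (x : ℝ) (k : ℤ) : distInt (x + k) = distInt x := by
  rw [distInt, round_add_intCast, distInt]
  push_cast
  ring_nf

lemma distInt_neg (x : ℝ) : distInt (-x) = distInt x := by
  have key : ∀ y : ℝ, distInt (-y) ≤ distInt y := fun y => by
    calc distInt (-y) ≤ |-y - ((-round y : ℤ) : ℝ)| := round_le _ _
      _ = distInt y := by rw [distInt, ← abs_neg]; push_cast; ring_nf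
  exact (key x).antisymm (by simpa using key (-x))

lemma summable_takagi2 (x : ℝ) :
    Summable fun n : ℕ => distInt ((2 : ℝ) ^ n * x) / (2 : ℝ) ^ n := by
  refine summable_geometric_two.of_nonneg_of_le
    (fun n => div_nonneg (distInt_nonneg _) (by positivity)) fun n => ?_
  rw [one_div, inv_pow, div_eq_mul_inv]
  exact mul_le_of_le_one_left (by positivity) ((distInt_le_half _).trans (by norm_num))

lemma takagi2_zero : takagi2 0 = 0 := by
  simp [takagi2, distInt]

lemma takagi2_eq_distInt_add (x : ℝ) : takagi2 x = distInt x + takagi2 (2 * x) / 2 := by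
  rw [takagi2, (summable_takagi2 x).tsum_eq_zero_add, takagi2, ← tsum_div_const]
  congr 1
  · simp
  · congr 1 with n
    rw [pow_succ, mul_assoc, div_div]

lemma takagi2_add_intCast (x : ℝ) (k : ℤ) : takagi2 (x + k) = takagi2 x := by
  unfold takagi2
  congr 1 with n
  rw [mul_add, show (2 : ℝ) ^ n * k = ((2 ^ n * k : ℤ) : ℝ) by push_cast; ring,
    distInt_add_intCast]

lemma takagi2_add_one (x : ℝ) : takagi2 (x + 1) = takagi2 x := by
  simpa using takagi2_add_intCast x 1

lemma takagi2_neg (x : ℝ) : takagi2 (-x) = takagi2 x := by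
  unfold takagi2
  congr 1 with n
  rw [mul_neg, distInt_neg]

lemma takagi2_one_sub (x : ℝ) : takagi2 (1 - x) = takagi2 x := by
  rw [sub_eq_neg_add, takagi2_add_one, takagi2_neg]

lemma takagi2_half_mul {y : ℝ} (h0 : 0 ≤ y) (h1 : y ≤ 1) :
    takagi2 (y / 2) = y / 2 + takagi2 y / 2 := by
  rw [takagi2_eq_distInt_add, distInt_of_le_half (by linarith) (by linarith),
    mul_div_cancel₀ _ two_ne_zero]

lemma takagi2_one_add_half {y : ℝ} (h0 : 0 ≤ y) (h1 : y ≤ 1) :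
    takagi2 ((1 + y) / 2) = (1 - y) / 2 + takagi2 y / 2 := by
  rw [takagi2_eq_distInt_add, distInt_of_half_le (by linarith) (by linarith),
    mul_div_cancel₀ _ two_ne_zero, add_comm 1 y, takagi2_add_one]
  ring

lemma takagi2_half : takagi2 (1 / 2) = 1 / 2 := by
  have := takagi2_one_add_half (y := 0) le_rfl zero_le_one
  norm_num [takagi2_zero] at this ⊢
  exact this

lemma add_div_two_pow_mem_Icc {n a : ℕ} (ha : a < 2 ^ n) {y : ℝ} (hy : y ∈ Icc (0 : ℝ) 1) :
    (a + y) / 2 ^ n ∈ Icc (0 : ℝ) 1 := by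
  have ha' : (a : ℝ) + 1 ≤ 2 ^ n := by exact_mod_cast ha
  constructor
  · have := hy.1; positivity
  · rw [div_le_one (by positivity)]; linarith [hy.2]

lemma div_two_pow_mem_Icc {v : ℝ} (hv : v ∈ Icc (0 : ℝ) 1) (k : ℕ) :
    v / 2 ^ k ∈ Icc (0 : ℝ) 1 :=
  ⟨div_nonneg hv.1 (by positivity), div_le_one_of_le₀ (hv.2.trans (one_le_pow₀ one_le_two))
    (by positivity)⟩

lemma exists_takagi2_add_div_two_pow (n : ℕ) :
    ∀ a : ℕ, a < 2 ^ n → ∃ s : ℤ, ∀ y ∈ Icc (0 : ℝ) 1,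
      takagi2 ((a + y) / 2 ^ n) = takagi2 (a / 2 ^ n) + (s * y + takagi2 y) / 2 ^ n := by
  induction n with
  | zero =>
    intro a ha
    obtain rfl : a = 0 := by simpa using ha
    exact ⟨0, fun y _ => by simp [takagi2_zero]⟩
  | succ n ih =>
    intro a ha
    rcases lt_or_ge a (2 ^ n) with hlt | hge
    · obtain ⟨s, hs⟩ := ih a hlt
      refine ⟨s + 1, fun y hy => ?_⟩
      have hz := add_div_two_pow_mem_Icc hlt hy
      have ha0 := add_div_two_pow_mem_Icc hlt (y := 0) (by simp)
      rw [add_zero] at ha0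
      rw [pow_succ, ← div_div, ← div_div, takagi2_half_mul hz.1 hz.2,
        takagi2_half_mul ha0.1 ha0.2, hs y hy]
      push_cast
      ring
    · obtain ⟨b, rfl⟩ := Nat.exists_eq_add_of_le hge
      have hb : b < 2 ^ n := by rw [pow_succ] at ha; omega
      obtain ⟨s, hs⟩ := ih b hb
      refine ⟨s - 1, fun y hy => ?_⟩
      have hz := add_div_two_pow_mem_Icc hb hy
      have hb0 := add_div_two_pow_mem_Icc hb (y := 0) (by simp)
      rw [add_zero] at hb0
      have hupper (t : ℝ) :
          ((2 ^ n + b : ℕ) + t) / 2 ^ (n + 1) = (1 + (b + t) / 2 ^ n) / 2 := by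
        push_cast; field_simp; ring
      rw [hupper, ← add_zero ((2 ^ n + b : ℕ) : ℝ), hupper, add_zero,
        takagi2_one_add_half hz.1 hz.2, takagi2_one_add_half hb0.1 hb0.2, hs y hy]
      push_cast
      field_simp
      ring

lemma takagi2_div_two_pow {v : ℝ} (h0 : 0 ≤ v) (h1 : v ≤ 1) (k : ℕ) :
    takagi2 (v / 2 ^ k) = (k * v + takagi2 v) / 2 ^ k := by
  induction k with
  | zero => simp
  | succ k ih =>
    have hv := div_two_pow_mem_Icc ⟨h0, h1⟩ k
    rw [pow_succ, ← div_div, takagi2_half_mul hv.1 hv.2, ih]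
    push_cast
    field_simp
    ring

lemma takagi2_two_add_div_four {u : ℝ} (h0 : 0 ≤ u) (h1 : u ≤ 1) (hu : takagi2 u = u) :
    takagi2 ((2 + u) / 4) = (2 + u) / 4 := by
  rw [show (2 + u) / 4 = (1 + u / 2) / 2 by ring, takagi2_one_add_half (by linarith) (by linarith),
    takagi2_half_mul h0 h1, hu]
  ring

-- `2/3 - 4⁻ⁿ/6` is the `n`-th iterate of `u ↦ (2 + u)/4` at the fixed point `1/2`.
lemma infinite_fixedPoints_takagi2 : {u ∈ Icc (0 : ℝ) 1 | takagi2 u = u}.Infinite := by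
  have hbound (n : ℕ) : 0 < 1 / (6 * (4 : ℝ) ^ n) ∧ 1 / (6 * (4 : ℝ) ^ n) ≤ 1 / 6 :=
    ⟨by positivity, by
      gcongr; exact le_mul_of_one_le_right (by norm_num) (one_le_pow₀ (by norm_num))⟩
  have hfix (n : ℕ) : takagi2 (2 / 3 - 1 / (6 * 4 ^ n)) = 2 / 3 - 1 / (6 * 4 ^ n) := by
    induction n with
    | zero => norm_num [takagi2_half]
    | succ n ih =>
      have step := takagi2_two_add_div_four (by linarith [hbound n]) (by linarith [hbound n]) ih
      rwa [show (2 + (2 / 3 - 1 / (6 * 4 ^ n))) / 4 = 2 / 3 - 1 / (6 * (4 : ℝ) ^ (n + 1)) by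
        field_simp; ring] at step
  refine Set.infinite_of_injective_forall_mem (f := fun n : ℕ => 2 / 3 - 1 / (6 * 4 ^ n))
    (fun a b hab => ?_) fun n => ⟨⟨by linarith [hbound n], by linarith [hbound n]⟩, hfix n⟩
  exact pow_right_injective₀ (by norm_num : (0 : ℝ) < 4) (by norm_num) (by simpa using hab)

lemma infinite_neg_natCast_mul_add_takagi2_eq (k : ℕ) :
    {y ∈ Icc (0 : ℝ) 1 | -(k : ℝ) * y + takagi2 y = (-(k : ℝ) + 1) / 2}.Infinite := by
  have hinj : Function.Injective fun u : ℝ => (1 + u / 2 ^ k) / 2 := fun u v h => by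
    simpa using h
  refine (infinite_fixedPoints_takagi2.image hinj.injOn).mono ?_
  rintro _ ⟨u, ⟨hu, hTu⟩, rfl⟩
  have hv := div_two_pow_mem_Icc hu k
  refine ⟨⟨by linarith [hv.1], by linarith [hv.2]⟩, ?_⟩
  rw [takagi2_one_add_half hv.1 hv.2, takagi2_div_two_pow hu.1 hu.2, hTu]
  field_simp
  ring

lemma infinite_intCast_mul_add_takagi2_eq (s : ℤ) :
    {y ∈ Icc (0 : ℝ) 1 | s * y + takagi2 y = (s + 1) / 2}.Infinite := by
  obtain ⟨k, rfl | rfl⟩ := Int.eq_nat_or_neg s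
  · refine ((infinite_neg_natCast_mul_add_takagi2_eq k).image
      (sub_right_injective (b := (1 : ℝ))).injOn).mono ?_
    rintro _ ⟨y, ⟨hy, hTy⟩, rfl⟩
    refine ⟨⟨by linarith [hy.2], by linarith [hy.1]⟩, ?_⟩
    rw [takagi2_one_sub]
    push_cast
    linarith
  · simpa using infinite_neg_natCast_mul_add_takagi2_eq k

lemma exists_eq_add_half_div_two_pow {x : ℝ} (hx : x ∈ Ioo 0 1) {i m : ℕ}
    (hxi : x = i / 2 ^ m) : ∃ n a : ℕ, a < 2 ^ n ∧ x = (a + 1 / 2) / 2 ^ n := by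
  obtain ⟨hx0, hx1⟩ := hx
  have hi0 : i ≠ 0 := by rintro rfl; simp [hxi] at hx0
  have him : i < 2 ^ m := by
    rw [hxi, div_lt_one (by positivity)] at hx1; exact_mod_cast hx1
  obtain ⟨k, o, ⟨a, rfl⟩, rfl⟩ := Nat.exists_eq_two_pow_mul_odd hi0
  have hkm : k < m := by
    by_contra! h
    have := Nat.pow_le_pow_right two_pos h
    have := Nat.le_mul_of_pos_right (2 ^ k) (by omega : 0 < 2 * a + 1)
    omega
  obtain ⟨n, rfl⟩ := Nat.exists_eq_add_of_lt hkm
  refine ⟨n, a, ?_, ?_⟩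
  · rw [add_assoc, pow_add] at him
    have := Nat.lt_of_mul_lt_mul_left him
    rw [pow_succ] at this
    omega
  · rw [hxi]
    push_cast
    field_simp
    ring

/-- If `x ∈ (0,1)` is a dyadic rational, then the level set
`{t ∈ [0,1] : T(t) = T(x)}` of the classical Takagi function is infinite. -/
theorem takagi_dyadic_level_set_infinite (x : ℝ) (hx : x ∈ Set.Ioo (0 : ℝ) 1)
    (hdyadic : ∃ i m : ℕ, 1 ≤ m ∧ x = (i : ℝ) / 2 ^ m) :
    {t ∈ Set.Icc (0 : ℝ) 1 | takagi2 t = takagi2 x}.Infinite := by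
  obtain ⟨i, m, -, hxi⟩ := hdyadic
  obtain ⟨n, a, ha, rfl⟩ := exists_eq_add_half_div_two_pow hx hxi
  obtain ⟨s, hs⟩ := exists_takagi2_add_div_two_pow n a ha
  have hinj : Function.Injective fun y : ℝ => (a + y) / 2 ^ n := fun y z h => by
    simpa using h
  refine ((infinite_intCast_mul_add_takagi2_eq s).image hinj.injOn).mono ?_
  rintro _ ⟨y, ⟨hy, hTy⟩, rfl⟩
  refine ⟨add_div_two_pow_mem_Icc ha hy, ?_⟩
  rw [hs y hy, hs (1 / 2) ⟨by norm_num, by norm_num⟩, takagi2_half, hTy]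
  ring
end

section
/- Let r ≥ 2 be even. If x, x' ∈ [0,1) with r-ary expansions x = 0.ε₁ε₂⋯ and x' = 0.η₁η₂⋯ satisfy (i) |D_{r,j}(x)| = |D_{r,j}(x')| for all j ≥ 1, and (ii) for each j, either ε_j = η_j or ε_j + η_j = r − 1, then T_r(x) = T_r(x'). -/
/-- The Takagi–van der Waerden function `T_r`. -/
noncomputable def takagi (r : ℕ) (x : ℝ) : ℝ :=
  ∑' n : ℕ, distInt ((r : ℝ) ^ n * x) / (r : ℝ) ^ n

/-- The `j`-th digit (`j ≥ 1`) in the `r`-ary expansion of `x ∈ [0,1)`,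
choosing the expansion ending in `0`'s for `r`-ary rationals. -/
noncomputable def rDigit (r : ℕ) (x : ℝ) (j : ℕ) : ℕ :=
  (⌊(r : ℝ) ^ j * x⌋ % (r : ℤ)).toNat

/-- `D_{r,n}(x) = #{1 ≤ j ≤ n : ε_j < r/2} − #{1 ≤ j ≤ n : ε_j ≥ r/2}`. -/
noncomputable def Drn (r n : ℕ) (x : ℝ) : ℤ :=
  (((Finset.Icc 1 n).filter fun j => 2 * rDigit r x j < r).card : ℤ) -
    (((Finset.Icc 1 n).filter fun j => r ≤ 2 * rDigit r x j).card : ℤ)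


/-! For even `r`, the digit `ε_{n+1}` lies in the lower half exactly when `{r^n x} < 1/2`, so
`dist(r^n x, ℤ) = (1 - s)/2 + s {r^n x}` with `s = ±1` the sign counted by `D_{r,n+1}`.
Summing by parts turns `T_r(x)` into a series whose `m`-th term involves only `ε_m`, `D_{r,m}(x)`.
Under the two hypotheses the consecutive pairs `(D_{r,m-1}, D_{r,m})` of `x` and `x'` are either
equal (and then `ε_m = η_m`) or opposite (and then `ε_m + η_m = r - 1`); in both cases the
difference of the `m`-th terms is `g_{m-1} - g_m` with `g_m = (D_{r,m}(x) - D_{r,m}(x'))/(2 r^m)`.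
The difference of the series therefore telescopes to `-lim g_m = 0`, as `|D_{r,m}| ≤ m`. -/

open Filter Topology

lemma distInt_fract (z : ℝ) : distInt (Int.fract z) = distInt z := by
  rw [distInt, distInt, Int.fract, round_sub_intCast, Int.cast_sub]
  ring_nf

lemma summable_takagi {r : ℕ} (hr : 1 < r) (x : ℝ) :
    Summable fun n : ℕ => distInt ((r : ℝ) ^ n * x) / (r : ℝ) ^ n := by
  have hr' : (1 : ℝ) < r := by exact_mod_cast hr
  refine Summable.of_nonneg_of_le (fun n => by unfold distInt; positivity) (fun n => ?_)
    ((summable_geometric_of_lt_one (by positivity) ((inv_lt_one₀ (by positivity)).2 hr')).mul_left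
      (1 / 2))
  rw [inv_pow, ← div_eq_mul_inv]
  gcongr
  exact abs_sub_round _

lemma tendsto_div_pow_of_abs_le {f : ℕ → ℝ} {R : ℝ} (hR : 1 < R) (hf : ∀ N, |f N| ≤ N) :
    Tendsto (fun N => f N / R ^ N) atTop (𝓝 0) := by
  refine squeeze_zero_norm (fun N => ?_)
    (by simpa using tendsto_pow_const_div_const_pow_of_one_lt 1 hR)
  rw [norm_div, Real.norm_eq_abs, norm_pow, Real.norm_eq_abs, abs_of_pos (by linarith : 0 < R)]
  gcongr
  exact hf N

def halfSign (r e : ℕ) : ℤ := if 2 * e < r then 1 else -1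

lemma abs_halfSign (r e : ℕ) : |halfSign r e| = 1 := by
  unfold halfSign; split_ifs <;> simp

lemma Drn_eq_sum (r n : ℕ) (x : ℝ) :
    Drn r n x = ∑ j ∈ Finset.Icc 1 n, halfSign r (rDigit r x j) := by
  simp only [Drn, halfSign, Finset.sum_ite, Finset.sum_const, not_lt, nsmul_eq_mul, mul_one,
    mul_neg]
  ring

lemma Drn_zero (r : ℕ) (x : ℝ) : Drn r 0 x = 0 := by
  simp [Drn]

lemma Drn_succ (r n : ℕ) (x : ℝ) :
    Drn r (n + 1) x = Drn r n x + halfSign r (rDigit r x (n + 1)) := by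
  rw [Drn_eq_sum, Drn_eq_sum, Finset.sum_Icc_succ_top (by omega)]

lemma abs_Drn_le (r n : ℕ) (x : ℝ) : |Drn r n x| ≤ n := by
  rw [Drn_eq_sum]
  calc _ ≤ ∑ j ∈ Finset.Icc 1 n, |halfSign r (rDigit r x j)| := Finset.abs_sum_le_sum_abs _ _
    _ = n := by simp [abs_halfSign]

lemma pow_succ_mul_eq_mul_fract_add {r : ℕ} (x : ℝ) (n : ℕ) :
    (r : ℝ) ^ (n + 1) * x =
      r * Int.fract ((r : ℝ) ^ n * x) + ((r * ⌊(r : ℝ) ^ n * x⌋ : ℤ) : ℝ) := by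
  rw [Int.fract]
  push_cast
  ring

lemma floor_mul_fract_eq_rDigit {r : ℕ} (hr : 0 < r) (x : ℝ) (n : ℕ) :
    ⌊(r : ℝ) * Int.fract ((r : ℝ) ^ n * x)⌋ = rDigit r x (n + 1) := by
  have hr' : (0 : ℝ) < r := by exact_mod_cast hr
  have h0 : 0 ≤ ⌊(r : ℝ) * Int.fract ((r : ℝ) ^ n * x)⌋ :=
    Int.floor_nonneg.2 (mul_nonneg hr'.le (Int.fract_nonneg _))
  have hlt : ⌊(r : ℝ) * Int.fract ((r : ℝ) ^ n * x)⌋ < r := by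
    rw [Int.floor_lt, Int.cast_natCast]
    exact mul_lt_of_lt_one_right hr' (Int.fract_lt_one _)
  rw [rDigit, pow_succ_mul_eq_mul_fract_add, Int.floor_add_intCast, Int.add_mul_emod_self_left,
    Int.emod_eq_of_lt h0 hlt, Int.toNat_of_nonneg h0]

lemma fract_pow_succ_mul {r : ℕ} (hr : 0 < r) (x : ℝ) (n : ℕ) :
    Int.fract ((r : ℝ) ^ (n + 1) * x) =
      r * Int.fract ((r : ℝ) ^ n * x) - rDigit r x (n + 1) := by
  rw [pow_succ_mul_eq_mul_fract_add, Int.fract_add_intCast, Int.fract, floor_mul_fract_eq_rDigit hr,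
    Int.cast_natCast]

lemma two_mul_rDigit_lt_iff {r : ℕ} (hr : 0 < r) (hre : Even r) (x : ℝ) (n : ℕ) :
    2 * rDigit r x (n + 1) < r ↔ Int.fract ((r : ℝ) ^ n * x) < 1 / 2 := by
  obtain ⟨k, rfl⟩ := hre
  have hk : (0 : ℝ) < k := by exact_mod_cast (by omega : 0 < k)
  rw [show 2 * rDigit (k + k) x (n + 1) < k + k ↔ (rDigit (k + k) x (n + 1) : ℤ) < k by omega,
    ← floor_mul_fract_eq_rDigit hr, Int.floor_lt]
  push_cast
  constructor <;> intro h <;> nlinarith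

lemma distInt_pow_mul {r : ℕ} (hr : 0 < r) (hre : Even r) (x : ℝ) (n : ℕ) :
    distInt ((r : ℝ) ^ n * x) =
      (1 - halfSign r (rDigit r x (n + 1))) / 2 +
        halfSign r (rDigit r x (n + 1)) * Int.fract ((r : ℝ) ^ n * x) := by
  rw [← distInt_fract, distInt, halfSign]
  have h0 := Int.fract_nonneg ((r : ℝ) ^ n * x)
  have h1 := Int.fract_lt_one ((r : ℝ) ^ n * x)
  split_ifs with h
  · rw [two_mul_rDigit_lt_iff hr hre x n] at h
    rw [round_eq_zero_iff.2 ⟨by linarith, h⟩, Int.cast_zero, sub_zero, abs_of_nonneg h0]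
    norm_num
  · rw [two_mul_rDigit_lt_iff hr hre x n, not_lt] at h
    have hround : round (Int.fract ((r : ℝ) ^ n * x)) = 1 := by
      rw [← sub_eq_zero, ← round_sub_one, round_eq_zero_iff]
      constructor <;> linarith
    rw [hround, Int.cast_one, abs_of_nonpos (by linarith)]
    push_cast
    ring

/-- Expanding `Int.fract (r ^ n * x) = ∑ k ≥ 1, ε_{n+k} / r ^ k` in `T_r` and exchanging the sums
gives `T_r(x) = ∑ m ≥ 1, (r (1 - s_m) / 2 + ε_m D_{r,m}(x)) / r ^ m`, where `s_m = halfSign r ε_m`;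
this is its term of index `m + 1`. -/
noncomputable def takagiDigitTerm (r : ℕ) (x : ℝ) (m : ℕ) : ℝ :=
  ((r : ℝ) * (1 - halfSign r (rDigit r x (m + 1))) / 2 +
      rDigit r x (m + 1) * Drn r (m + 1) x) / (r : ℝ) ^ (m + 1)

lemma sum_range_distInt_div_pow_eq {r : ℕ} (hr : 0 < r) (hre : Even r) (x : ℝ) (N : ℕ) :
    ∑ n ∈ Finset.range N, distInt ((r : ℝ) ^ n * x) / (r : ℝ) ^ n =
      ∑ m ∈ Finset.range N, takagiDigitTerm r x m +
        Drn r N x * Int.fract ((r : ℝ) ^ N * x) / (r : ℝ) ^ N := by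
  induction N with
  | zero => simp [Drn_zero]
  | succ N ih =>
    have hr' : (r : ℝ) ≠ 0 := by exact_mod_cast hr.ne'
    rw [Finset.sum_range_succ, Finset.sum_range_succ, ih, distInt_pow_mul hr hre x N,
      fract_pow_succ_mul hr, takagiDigitTerm, Drn_succ, pow_succ]
    push_cast
    field_simp
    ring

lemma tendsto_sum_takagiDigitTerm {r : ℕ} (hr : 2 ≤ r) (hre : Even r) (x : ℝ) :
    Tendsto (fun N => ∑ m ∈ Finset.range N, takagiDigitTerm r x m) atTop (𝓝 (takagi r x)) := by
  have hremainder : Tendsto (fun N => Drn r N x * Int.fract ((r : ℝ) ^ N * x) / (r : ℝ) ^ N)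
      atTop (𝓝 0) := by
    refine tendsto_div_pow_of_abs_le (by exact_mod_cast hr) fun N => ?_
    rw [abs_mul, abs_of_nonneg (Int.fract_nonneg ((r : ℝ) ^ N * x))]
    calc _ ≤ |(Drn r N x : ℝ)| * 1 := by gcongr; exact (Int.fract_lt_one _).le
      _ ≤ N := by rw [mul_one]; exact_mod_cast abs_Drn_le r N x
  have hpartial := (summable_takagi (by omega : 1 < r) x).hasSum.tendsto_sum_nat
  simp only [sum_range_distInt_div_pow_eq (by omega : 0 < r) hre] at hpartial
  simpa [takagi] using hpartial.sub hremainder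

lemma level_step_cases {r e η : ℕ} (hre : Even r) {a a' : ℤ} (ha : |a| = |a'|)
    (hb : |a + halfSign r e| = |a' + halfSign r η|) (hd : e = η ∨ e + η = r - 1) :
    (e = η ∧ a = a') ∨
      ((e : ℤ) + η = r - 1 ∧ a' = -a ∧ halfSign r η = -halfSign r e) := by
  obtain ⟨k, rfl⟩ := hre
  rcases abs_eq_abs.mp ha with ha | ha <;> rcases abs_eq_abs.mp hb with hb | hb <;>
    unfold halfSign at * <;> split_ifs at * <;> omega

lemma level_step_identity {r e η : ℕ} (hre : Even r) {a a' : ℤ} (ha : |a| = |a'|)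
    (hb : |a + halfSign r e| = |a' + halfSign r η|) (hd : e = η ∨ e + η = r - 1) :
    r * (halfSign r η - halfSign r e) +
        2 * (e * (a + halfSign r e) - η * (a' + halfSign r η)) =
      r * (a - a') - ((a + halfSign r e) - (a' + halfSign r η)) := by
  rcases level_step_cases hre ha hb hd with ⟨rfl, rfl⟩ | ⟨hsum, rfl, hs⟩
  · ring
  · rw [hs]
    linear_combination (2 * (a + halfSign r e)) * hsum

lemma takagiDigitTerm_sub_takagiDigitTerm {r : ℕ} (hr : 0 < r) (hre : Even r) {x x' : ℝ} {m : ℕ}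
    (ha : |Drn r m x| = |Drn r m x'|) (hb : |Drn r (m + 1) x| = |Drn r (m + 1) x'|)
    (hd : rDigit r x (m + 1) = rDigit r x' (m + 1) ∨
      rDigit r x (m + 1) + rDigit r x' (m + 1) = r - 1) :
    takagiDigitTerm r x m - takagiDigitTerm r x' m =
      (Drn r m x - Drn r m x') / 2 / (r : ℝ) ^ m -
        (Drn r (m + 1) x - Drn r (m + 1) x') / 2 / (r : ℝ) ^ (m + 1) := by
  rw [Drn_succ, Drn_succ] at hb
  have key := congrArg (Int.cast : ℤ → ℝ) (level_step_identity hre ha hb hd)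
  push_cast at key
  have hr' : (r : ℝ) ≠ 0 := by exact_mod_cast hr.ne'
  rw [takagiDigitTerm, takagiDigitTerm, Drn_succ, Drn_succ, pow_succ]
  push_cast
  field_simp
  linear_combination key

theorem takagi_local_level_general (r : ℕ) (hr : 2 ≤ r) (hre : Even r)
    (x x' : ℝ)
    (hD : ∀ j, 1 ≤ j → |Drn r j x| = |Drn r j x'|)
    (hdig : ∀ j, 1 ≤ j →
      rDigit r x j = rDigit r x' j ∨ rDigit r x j + rDigit r x' j = r - 1) :
    takagi r x = takagi r x' := by
  set gap : ℕ → ℝ := fun n => (Drn r n x - Drn r n x') / 2 / (r : ℝ) ^ n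
  have hD' : ∀ m, |Drn r m x| = |Drn r m x'| := fun
    | 0 => by simp [Drn_zero]
    | m + 1 => hD (m + 1) m.succ_pos
  have htelescope : ∀ N, ∑ m ∈ Finset.range N, takagiDigitTerm r x m -
      ∑ m ∈ Finset.range N, takagiDigitTerm r x' m = -gap N := fun N => by
    rw [← Finset.sum_sub_distrib, Finset.sum_congr rfl fun m _ =>
      takagiDigitTerm_sub_takagiDigitTerm (by omega) hre (hD' m) (hD' (m + 1))
        (hdig (m + 1) m.succ_pos),
      Finset.sum_range_sub']
    simp [gap, Drn_zero]
  have hgap : Tendsto gap atTop (𝓝 0) := by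
    refine tendsto_div_pow_of_abs_le (by exact_mod_cast hr) fun N => ?_
    have hx : |(Drn r N x : ℝ)| ≤ N := by exact_mod_cast abs_Drn_le r N x
    have hx' : |(Drn r N x' : ℝ)| ≤ N := by exact_mod_cast abs_Drn_le r N x'
    rw [abs_div, abs_two, div_le_iff₀ two_pos]
    calc _ ≤ |(Drn r N x : ℝ)| + |(Drn r N x' : ℝ)| := abs_sub _ _
      _ ≤ (N : ℝ) * 2 := by linarith
  have hlim := (tendsto_sum_takagiDigitTerm hr hre x).sub (tendsto_sum_takagiDigitTerm hr hre x')
  simp only [htelescope] at hlim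
  exact sub_eq_zero.1 (tendsto_nhds_unique hlim (by simpa using hgap.neg))

/-- Let `r ≥ 2` be even, and let `x, x' ∈ [0,1)` have `r`-ary digits
`ε_j, η_j`. If `|D_{r,j}(x)| = |D_{r,j}(x')|` for all `j ≥ 1`, and for each
`j ≥ 1` either `ε_j = η_j` or `ε_j + η_j = r − 1`, then `T_r(x) = T_r(x')`. -/
theorem takagi_local_level (r : ℕ) (hr : 2 ≤ r) (hre : Even r)
    (x x' : ℝ) (hx : x ∈ Set.Ico (0 : ℝ) 1) (hx' : x' ∈ Set.Ico (0 : ℝ) 1)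
    (hD : ∀ j, 1 ≤ j → |Drn r j x| = |Drn r j x'|)
    (hdig : ∀ j, 1 ≤ j →
      rDigit r x j = rDigit r x' j ∨ rDigit r x j + rDigit r x' j = r - 1) :
    takagi r x = takagi r x' :=
  takagi_local_level_general r hr hre x x' hD hdig
end

section
/- For r = 2 and every m ≥ 2, the number of binary strings of length 2m encoding leading humps of order m and generation 2 equals the number of those of order m and generation 1; i.e., card(Ĥ²_{m,2}) = card(Ĥ²_{m,1}). -/
open scoped Classical

/-- For a binary string `ε` of length `N`, `D2 ε j` is
`#{i ≤ j : ε_i = 0} − #{i ≤ j : ε_i = 1}` over the first `j` entries. -/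
def D2 {N : ℕ} (ε : Fin N → Fin 2) (j : ℕ) : ℤ :=
  ((Finset.univ.filter fun i : Fin N => (i : ℕ) < j ∧ ε i = 0).card : ℤ) -
    ((Finset.univ.filter fun i : Fin N => (i : ℕ) < j ∧ ε i = 1).card : ℤ)

/-- `ε` encodes a leading hump of order `m`: `D_j ≥ 0` for all `j ≤ 2m`,
`D_{2m} = 0`, and `ε_j = 1` whenever `D_j = 0`. -/
def IsLeadingHump (m : ℕ) (ε : Fin (2 * m) → Fin 2) : Prop :=
  (∀ j, 1 ≤ j → j ≤ 2 * m → 0 ≤ D2 ε j) ∧ D2 ε (2 * m) = 0 ∧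
    ∀ j (hj : 1 ≤ j) (hj' : j ≤ 2 * m), D2 ε j = 0 → ε ⟨j - 1, by omega⟩ = 1

/-- `Ĥ²_{m,n}`: the set of binary strings of length `2m` encoding leading
humps of order `m` and generation `n`. -/
noncomputable def H2 (m n : ℕ) : Finset (Fin (2 * m) → Fin 2) :=
  Finset.univ.filter fun ε => IsLeadingHump m ε ∧
    ((Finset.Icc 1 (2 * m)).filter fun j => D2 ε j = 0).card = n

/-!
A leading hump of generation 2 is a word `0 a 1 0 b 1` with `a`, `b` Dyck words, and one of
generation 1 is a word `0 c 1` with `c` a Dyck word. Deleting the down-step that closes the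
first hump and appending a down-step turns `0 a 1 0 b 1` into `0 a 0 b 1 1`, a hump of
generation 1. The deleted position is recovered from the image as the last time before the
final step at which the height is `1`; reinserting a down-step there inverts the map.
-/

def D2Step (b : Fin 2) : ℤ := if b = 0 then 1 else -1

section Height

variable {N : ℕ}

lemma D2_eq_sum (ε : Fin N → Fin 2) (j : ℕ) :
    D2 ε j = ∑ i ∈ Finset.univ.filter (fun i : Fin N => (i : ℕ) < j), D2Step (ε i) := by
  have hstep : ∀ b : Fin 2, D2Step b = (if b = 0 then 1 else 0) - (if b = 1 then 1 else 0) := by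
    decide
  simp only [D2, hstep, Finset.sum_sub_distrib, Finset.sum_boole, Finset.filter_filter]

lemma D2_zero (ε : Fin N → Fin 2) : D2 ε 0 = 0 := by
  simp [D2]

lemma D2_succ (ε : Fin N → Fin 2) {j : ℕ} (hj : j < N) :
    D2 ε (j + 1) = D2 ε j + D2Step (ε ⟨j, hj⟩) := by
  have hfilter : Finset.univ.filter (fun i : Fin N => (i : ℕ) < j + 1) =
      insert ⟨j, hj⟩ (Finset.univ.filter fun i : Fin N => (i : ℕ) < j) := by
    ext i
    simp only [Finset.mem_filter, Finset.mem_univ, true_and, Finset.mem_insert, Fin.ext_iff]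
    omega
  rw [D2_eq_sum, D2_eq_sum, hfilter, Finset.sum_insert (by simp), add_comm]

lemma D2_congr {ε ε' : Fin N → Fin 2} {j : ℕ} (h : ∀ i : Fin N, (i : ℕ) < j → ε i = ε' i) :
    D2 ε j = D2 ε' j := by
  rw [D2_eq_sum, D2_eq_sum]
  exact Finset.sum_congr rfl fun i hi => by rw [h i (Finset.mem_filter.mp hi).2]

lemma D2_sub_eq_of_shift {ε ε' : Fin N → Fin 2} {p : ℕ}
    (h : ∀ i (hi : i + 1 < N), p ≤ i → ε' ⟨i, by omega⟩ = ε ⟨i + 1, hi⟩) {j : ℕ}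
    (hpj : p ≤ j) (hjN : j < N) :
    D2 ε' j - D2 ε' p = D2 ε (j + 1) - D2 ε (p + 1) := by
  induction j, hpj using Nat.le_induction with
  | base => simp
  | succ j hpj ih =>
    rw [D2_succ ε' (by omega), D2_succ ε hjN, h j hjN hpj]
    linarith [ih (by omega)]

lemma D2Step_eq_one_or (b : Fin 2) : D2Step b = 1 ∨ D2Step b = -1 := by
  unfold D2Step
  split_ifs <;> simp

lemma eq_one_of_D2_succ_eq_zero (ε : Fin N → Fin 2) {j : ℕ} (hj : j < N)
    (hnn : 0 ≤ D2 ε j) (h0 : D2 ε (j + 1) = 0) : ε ⟨j, hj⟩ = 1 := by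
  rw [D2_succ ε hj] at h0
  revert h0
  unfold D2Step
  split_ifs with h <;> omega

end Height

section RemoveInsert

variable {α : Type*} {N : ℕ}

def removeNthSnoc (p : ℕ) (a : α) (ε : Fin N → α) : Fin N → α := fun i =>
  if (i : ℕ) < p then ε i else if h : (i : ℕ) + 1 < N then ε ⟨i + 1, h⟩ else a

def insertNthInit (p : ℕ) (a : α) (ε : Fin N → α) : Fin N → α := fun i =>
  if (i : ℕ) < p then ε i else if (i : ℕ) = p then a else ε ⟨i - 1, by omega⟩

lemma insertNthInit_removeNthSnoc {p : ℕ} {a : α} {ε : Fin N → α} (hp : p < N)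
    (ha : ε ⟨p, hp⟩ = a) : insertNthInit p a (removeNthSnoc p a ε) = ε := by
  subst ha
  funext i
  simp only [insertNthInit, removeNthSnoc]
  split_ifs <;> first | rfl | omega | (congr 1; ext; simp only; omega)

lemma removeNthSnoc_insertNthInit {p : ℕ} {a : α} {ε : Fin N → α} (hp : p < N)
    (ha : ε ⟨N - 1, by omega⟩ = a) : removeNthSnoc p a (insertNthInit p a ε) = ε := by
  subst ha
  funext i
  simp only [insertNthInit, removeNthSnoc]
  split_ifs <;> first | rfl | omega | (congr 1; ext; simp only; omega)

end RemoveInsert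

section HeightRemoveInsert

variable {N : ℕ} {p j : ℕ} {a : Fin 2} {ε : Fin N → Fin 2}

lemma D2_removeNthSnoc_of_le (hj : j ≤ p) : D2 (removeNthSnoc p a ε) j = D2 ε j :=
  D2_congr fun i hi => if_pos (by omega)

lemma D2_removeNthSnoc_of_ge (hpj : p ≤ j) (hj : j < N) :
    D2 (removeNthSnoc p a ε) j = D2 ε (j + 1) - D2Step (ε ⟨p, by omega⟩) := by
  have hshift := D2_sub_eq_of_shift (ε := ε) (ε' := removeNthSnoc p a ε)
    (fun i hi hpi => by simp only [removeNthSnoc]; rw [if_neg (by omega), dif_pos hi]) hpj hj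
  rw [D2_removeNthSnoc_of_le le_rfl, D2_succ ε (j := p) (by omega)] at hshift
  linarith

lemma D2_removeNthSnoc_self (hp : p < N) :
    D2 (removeNthSnoc p a ε) N = D2 ε N - D2Step (ε ⟨p, hp⟩) + D2Step a := by
  obtain ⟨n, rfl⟩ : ∃ n, N = n + 1 := ⟨N - 1, by omega⟩
  have hlast : removeNthSnoc p a ε ⟨n, by omega⟩ = a := by
    simp only [removeNthSnoc]
    rw [if_neg (by omega), dif_neg (by omega)]
  rw [D2_succ _ (Nat.lt_succ_self n), hlast, D2_removeNthSnoc_of_ge (by omega) (by omega)]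

lemma D2_insertNthInit_of_le (hj : j ≤ p) : D2 (insertNthInit p a ε) j = D2 ε j :=
  D2_congr fun i hi => if_pos (by omega)

lemma D2_insertNthInit_succ (hpj : p ≤ j) (hj : j < N) :
    D2 (insertNthInit p a ε) (j + 1) = D2 ε j + D2Step a := by
  have hshift := D2_sub_eq_of_shift (ε := insertNthInit p a ε) (ε' := ε)
    (fun i hi hpi => by
      simp only [insertNthInit]
      rw [if_neg (by omega), if_neg (by omega)]
      rfl) hpj hj
  have hp : p < N := by omega
  have hstep : insertNthInit p a ε ⟨p, hp⟩ = a := by simp [insertNthInit]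
  rw [D2_succ _ hp, hstep, D2_insertNthInit_of_le le_rfl] at hshift
  linarith

end HeightRemoveInsert

noncomputable def firstReturnStep {N : ℕ} (ε : Fin N → Fin 2) : ℕ :=
  sInf {j | D2 ε (j + 1) = 0}

noncomputable def lastHeightOne {N : ℕ} (ε : Fin N → Fin 2) : ℕ :=
  sSup {j | j + 1 < N ∧ D2 ε j = 1}

section Hump

variable {m p : ℕ} {ε : Fin (2 * m) → Fin 2}

lemma isLeadingHump_iff :
    IsLeadingHump m ε ↔ (∀ j, 1 ≤ j → j ≤ 2 * m → 0 ≤ D2 ε j) ∧ D2 ε (2 * m) = 0 := by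
  refine ⟨fun h => ⟨h.1, h.2.1⟩, fun ⟨hnn, hend⟩ => ⟨hnn, hend, fun j hj hj' h0 => ?_⟩⟩
  obtain ⟨i, rfl⟩ : ∃ i, j = i + 1 := ⟨j - 1, by omega⟩
  refine eq_one_of_D2_succ_eq_zero ε _ ?_ h0
  rcases Nat.eq_zero_or_pos i with rfl | hi
  · rw [D2_zero]
  · exact hnn i hi (by omega)

lemma card_filter_D2_eq_zero {N : ℕ} {ε : Fin N → Fin 2} (hN : 0 < N) (hend : D2 ε N = 0) :
    ((Finset.Icc 1 N).filter fun j => D2 ε j = 0).card =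
      ((Finset.Ico 1 N).filter fun j => D2 ε j = 0).card + 1 := by
  rw [← Finset.Ico_insert_right hN, Finset.filter_insert, if_pos hend,
    Finset.card_insert_of_notMem (by simp)]

lemma mem_H2_succ_iff (hm : 0 < m) {n : ℕ} :
    ε ∈ H2 m (n + 1) ↔ (∀ j, 1 ≤ j → j ≤ 2 * m → 0 ≤ D2 ε j) ∧ D2 ε (2 * m) = 0 ∧
      ((Finset.Ico 1 (2 * m)).filter fun j => D2 ε j = 0).card = n := by
  simp only [H2, Finset.mem_filter, Finset.mem_univ, true_and, isLeadingHump_iff]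
  constructor
  · rintro ⟨⟨hnn, hend⟩, hcard⟩
    exact ⟨hnn, hend, by rw [card_filter_D2_eq_zero (by omega) hend] at hcard; omega⟩
  · rintro ⟨hnn, hend, hcard⟩
    exact ⟨⟨hnn, hend⟩, by rw [card_filter_D2_eq_zero (by omega) hend, hcard]⟩

lemma mem_H2_one_iff (hm : 0 < m) :
    ε ∈ H2 m 1 ↔ D2 ε (2 * m) = 0 ∧ ∀ j, 1 ≤ j → j < 2 * m → 0 < D2 ε j := by
  simp only [mem_H2_succ_iff hm, Finset.card_eq_zero, Finset.filter_eq_empty_iff, Finset.mem_Ico]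
  constructor
  · rintro ⟨hnn, hend, hzero⟩
    exact ⟨hend, fun j hj hj' => lt_of_le_of_ne (hnn j hj hj'.le) (Ne.symm (hzero ⟨hj, hj'⟩))⟩
  · rintro ⟨hend, hpos⟩
    refine ⟨fun j hj hj' => ?_, hend, fun j hj => (hpos j hj.1 hj.2).ne'⟩
    rcases hj'.lt_or_eq with hj' | rfl
    · exact (hpos j hj hj').le
    · exact hend.ge

lemma mem_H2_two_iff (hm : 0 < m) :
    ε ∈ H2 m 2 ↔ D2 ε (2 * m) = 0 ∧ ∃ p, p + 1 < 2 * m ∧ D2 ε (p + 1) = 0 ∧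
      ∀ j, 1 ≤ j → j < 2 * m → j ≠ p + 1 → 0 < D2 ε j := by
  simp only [mem_H2_succ_iff hm, Finset.card_eq_one, Finset.eq_singleton_iff_unique_mem,
    Finset.mem_filter, Finset.mem_Ico]
  constructor
  · rintro ⟨hnn, hend, k, ⟨⟨hk, hk'⟩, hk0⟩, hunique⟩
    refine ⟨hend, k - 1, by omega, by rwa [Nat.sub_add_cancel hk], fun j hj hj' hjk => ?_⟩
    exact lt_of_le_of_ne (hnn j hj hj'.le) fun h0 =>
      hjk (by rw [hunique j ⟨⟨hj, hj'⟩, h0.symm⟩]; omega)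
  · rintro ⟨hend, p, hp, hp0, hpos⟩
    refine ⟨fun j hj hj' => ?_, hend, p + 1, ⟨⟨by omega, hp⟩, hp0⟩,
      fun j ⟨⟨hj, hj'⟩, h0⟩ => by_contra fun hjp => (hpos j hj hj' hjp).ne' h0⟩
    by_cases hjp : j = p + 1
    · exact hjp ▸ hp0.ge
    rcases hj'.lt_or_eq with hj' | rfl
    · exact (hpos j hj hj' hjp).le
    · exact hend.ge

lemma D2_nonneg_of_mem_H2 {n j : ℕ} (hε : ε ∈ H2 m n) (hj : j ≤ 2 * m) : 0 ≤ D2 ε j := by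
  rcases Nat.eq_zero_or_pos j with rfl | hj0
  · rw [D2_zero]
  · exact (Finset.mem_filter.mp hε).2.1.1 j hj0 hj

lemma removeNthSnoc_mem_H2_one (hp : p + 1 < 2 * m) (hend : D2 ε (2 * m) = 0)
    (hp0 : D2 ε (p + 1) = 0) (hpos : ∀ j, 1 ≤ j → j < 2 * m → j ≠ p + 1 → 0 < D2 ε j)
    (hstep : ε ⟨p, by omega⟩ = 1) :
    removeNthSnoc p 1 ε ∈ H2 m 1 ∧
      IsGreatest {j | j + 1 < 2 * m ∧ D2 (removeNthSnoc p 1 ε) j = 1} p := by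
  have hafter : ∀ j, p ≤ j → j < 2 * m → D2 (removeNthSnoc p 1 ε) j = D2 ε (j + 1) + 1 := by
    intro j hpj hj
    rw [D2_removeNthSnoc_of_ge hpj hj, hstep, show D2Step 1 = -1 from rfl, sub_neg_eq_add]
  have hnn : ∀ j, p < j → j < 2 * m → 0 ≤ D2 ε (j + 1) := by
    intro j hpj hj
    rcases (show j + 1 ≤ 2 * m by omega).lt_or_eq with hj' | hj'
    · exact (hpos (j + 1) (by omega) hj' (by omega)).le
    · rw [hj']
      exact hend.ge
  refine ⟨(mem_H2_one_iff (by omega)).mpr ⟨?_, fun j hj hj' => ?_⟩, ⟨⟨hp, ?_⟩, ?_⟩⟩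
  · rw [D2_removeNthSnoc_self (by omega), hend, hstep]
    ring
  · rcases le_or_gt j p with hjp | hjp
    · rw [D2_removeNthSnoc_of_le hjp]
      exact hpos j hj hj' (by omega)
    · rw [hafter j hjp.le hj']
      linarith [hnn j hjp hj']
  · rw [hafter p le_rfl (by omega), hp0, zero_add]
  · rintro j ⟨hj, hj1⟩
    by_contra! hjp
    rw [hafter j hjp.le (by omega), add_eq_right] at hj1
    exact (hpos (j + 1) (by omega) hj (by omega)).ne' hj1

lemma insertNthInit_mem_H2_two (hend : D2 ε (2 * m) = 0)
    (hpos : ∀ j, 1 ≤ j → j < 2 * m → 0 < D2 ε j)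
    (hp : IsGreatest {j | j + 1 < 2 * m ∧ D2 ε j = 1} p)
    (hstep : ε ⟨2 * m - 1, by have := hp.1.1; omega⟩ = 1) :
    insertNthInit p 1 ε ∈ H2 m 2 ∧ IsLeast {j | D2 (insertNthInit p 1 ε) (j + 1) = 0} p := by
  obtain ⟨⟨hp, hp1⟩, hmax⟩ := hp
  have hafter : ∀ j, p ≤ j → j < 2 * m → D2 (insertNthInit p 1 ε) (j + 1) = D2 ε j - 1 := by
    intro j hpj hj
    rw [D2_insertNthInit_succ hpj hj, show D2Step 1 = -1 from rfl, ← sub_eq_add_neg]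
  have hlast : D2 ε (2 * m - 1) = 1 := by
    have h := D2_succ ε (j := 2 * m - 1) (by omega)
    rw [Nat.sub_add_cancel (by omega), hend, hstep] at h
    linarith [show D2Step 1 = -1 from rfl]
  refine ⟨(mem_H2_two_iff (by omega)).mpr ⟨?_, p, hp, ?_, fun j hj hj' hjp => ?_⟩, ⟨?_, ?_⟩⟩
  · have h := hafter (2 * m - 1) (by omega) (by omega)
    rwa [Nat.sub_add_cancel (by omega), hlast, sub_self] at h
  · rw [hafter p le_rfl (by omega), hp1, sub_self]
  · rcases le_or_gt j p with hjp' | hjp'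
    · rw [D2_insertNthInit_of_le hjp']
      exact hpos j hj hj'
    · obtain ⟨i, rfl⟩ : ∃ i, j = i + 1 := ⟨j - 1, by omega⟩
      rw [hafter i (by omega) (by omega), sub_pos]
      refine lt_of_le_of_ne (hpos i (by omega) (by omega)) fun h1 => ?_
      exact absurd (hmax ⟨hj', h1.symm⟩) (by omega)
  · show D2 (insertNthInit p 1 ε) (p + 1) = 0
    rw [hafter p le_rfl (by omega), hp1, sub_self]
  · intro j (hj : D2 (insertNthInit p 1 ε) (j + 1) = 0)
    by_contra! hjp
    rw [D2_insertNthInit_of_le hjp] at hj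
    exact (hpos (j + 1) (by omega) (by omega)).ne' hj

end Hump

section Bijection

variable {m : ℕ} {ε : Fin (2 * m) → Fin 2}

lemma removeNthSnoc_firstReturnStep_mem_H2_one (hm : 0 < m) (hε : ε ∈ H2 m 2) :
    removeNthSnoc (firstReturnStep ε) 1 ε ∈ H2 m 1 ∧
      insertNthInit (lastHeightOne (removeNthSnoc (firstReturnStep ε) 1 ε)) 1
        (removeNthSnoc (firstReturnStep ε) 1 ε) = ε := by
  obtain ⟨hend, p, hp, hp0, hpos⟩ := (mem_H2_two_iff hm).mp hε
  have hfirst : firstReturnStep ε = p := by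
    refine IsLeast.csInf_eq ⟨hp0, fun j (hj : D2 ε (j + 1) = 0) => ?_⟩
    by_contra! hjp
    exact (hpos (j + 1) (by omega) (by omega) (by omega)).ne' hj
  have hstep : ε ⟨p, by omega⟩ = 1 :=
    eq_one_of_D2_succ_eq_zero ε _ (D2_nonneg_of_mem_H2 hε (by omega)) hp0
  obtain ⟨hmem, hlast⟩ := removeNthSnoc_mem_H2_one hp hend hp0 hpos hstep
  rw [hfirst, show lastHeightOne (removeNthSnoc p 1 ε) = p from hlast.csSup_eq]
  exact ⟨hmem, insertNthInit_removeNthSnoc _ hstep⟩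

lemma insertNthInit_lastHeightOne_mem_H2_two (hm : 2 ≤ m) (hε : ε ∈ H2 m 1) :
    insertNthInit (lastHeightOne ε) 1 ε ∈ H2 m 2 ∧
      removeNthSnoc (firstReturnStep (insertNthInit (lastHeightOne ε) 1 ε)) 1
        (insertNthInit (lastHeightOne ε) 1 ε) = ε := by
  obtain ⟨hend, hpos⟩ := (mem_H2_one_iff (by omega)).mp hε
  have hone : D2 ε 1 = 1 := by
    have h := D2_succ ε (j := 0) (by omega)
    rcases D2Step_eq_one_or (ε ⟨0, by omega⟩) with hs | hs <;>
      linarith [D2_zero ε, hpos 1 le_rfl (by omega)]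
  have hbdd : BddAbove {j | j + 1 < 2 * m ∧ D2 ε j = 1} := ⟨2 * m, fun j hj => by grind⟩
  have hgreatest : IsGreatest {j | j + 1 < 2 * m ∧ D2 ε j = 1} (lastHeightOne ε) :=
    ⟨Nat.sSup_mem ⟨1, by omega, hone⟩ hbdd, fun j hj => le_csSup hbdd hj⟩
  have hstep : ε ⟨2 * m - 1, by omega⟩ = 1 :=
    eq_one_of_D2_succ_eq_zero ε _ (D2_nonneg_of_mem_H2 hε (by omega))
      (by rwa [Nat.sub_add_cancel (by omega)])
  obtain ⟨hmem, hfirst⟩ := insertNthInit_mem_H2_two hend hpos hgreatest hstep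
  rw [show firstReturnStep (insertNthInit (lastHeightOne ε) 1 ε) = lastHeightOne ε from
    hfirst.csInf_eq]
  exact ⟨hmem, removeNthSnoc_insertNthInit (by have := hgreatest.1.1; omega) hstep⟩

end Bijection

/-- For every `m ≥ 2`, the number of leading humps of order `m` and
generation `2` equals the number of those of order `m` and generation `1`. -/
theorem card_H2_two_eq_one (m : ℕ) (hm : 2 ≤ m) :
    (H2 m 2).card = (H2 m 1).card :=
  Finset.card_nbij' (fun ε => removeNthSnoc (firstReturnStep ε) 1 ε)
    (fun ε => insertNthInit (lastHeightOne ε) 1 ε)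
    (fun _ hε => (removeNthSnoc_firstReturnStep_mem_H2_one (by omega) hε).1)
    (fun _ hε => (insertNthInit_lastHeightOne_mem_H2_two hm hε).1)
    (fun _ hε => (removeNthSnoc_firstReturnStep_mem_H2_one (by omega) hε).2)
    (fun _ hε => (insertNthInit_lastHeightOne_mem_H2_two hm hε).2)
end

section
/- For r = 2 and all integers m ≥ n ≥ 1, card(Ĥ²_{m,n}) = ∑_{i=0}^{m−1} (−1)^i binom(n−i−1, i) C_{m−i−1}. -/
open scoped Classical

/-!
Reading `0` as an up step `U` and `1` as a down step `D`, `Ĥ²_{m,n}` is the set of Dyck words of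
semilength `m` with `n` returns to the axis; the condition `ε_j = 1` at `D_j = 0` is automatic,
since a nonempty balanced prefix of a Dyck word ends with `D`.

Let `h(m, n)` count these words. A word `(x)c` of semilength `m + 1` with `n + 1` returns either
has `x` empty, and then `c` has semilength `m` and `n` returns, or `x = (a)b`, and then
`(x)c ↦ (a)(b)c` is a bijection onto the words of semilength `m + 1` with `n + 2` returns. Hence
`h(m + 1, n + 1) = h(m, n) + h(m + 1, n + 2)`, which together with `h(m + 1, 1) = C_m` and
`h(m + 1, 0) = 0` determines `h(m, n)` for `1 ≤ n ≤ m` by induction on `n`; by Pascal's rule the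
alternating sum satisfies the same recursion.
-/

open DyckStep Finset

lemma Nat.count_congr_of_lt {p q : ℕ → Prop} [DecidablePred p] [DecidablePred q] {n : ℕ}
    (h : ∀ k < n, p k ↔ q k) : Nat.count p n = Nat.count q n :=
  le_antisymm (Nat.count_mono_left fun k hk => (h k hk).1)
    (Nat.count_mono_left fun k hk => (h k hk).2)

lemma Nat.card_filter_Icc_one_eq_count (p : ℕ → Prop) [DecidablePred p] (n : ℕ) :
    #{j ∈ Icc 1 n | p j} = Nat.count (fun k => p (k + 1)) n := by
  induction n with
  | zero => simp
  | succ n ih =>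
    rw [← insert_Icc_right_eq_Icc_add_one (by omega), filter_insert, Nat.count_succ, ← ih]
    split_ifs
    · rw [card_insert_of_notMem (by simp)]
    · rfl

lemma Nat.choose_succ_sub_succ (k j : ℕ) :
    (k + 1 - j).choose (j + 1) = (k - j).choose (j + 1) + (k - j).choose j := by
  rcases le_or_gt j k with h | h
  · rw [Nat.sub_add_comm h, Nat.choose_succ_succ', add_comm]
  · obtain ⟨i, rfl⟩ := Nat.exists_eq_add_of_lt h
    simp [show k + 1 - (k + i + 1) = 0 by omega, show k - (k + i + 1) = 0 by omega]

lemma List.count_take_ofFn {α : Type*} [DecidableEq α] {N : ℕ} (g : Fin N → α) (a : α)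
    (j : ℕ) :
    ((List.ofFn g).take j).count a = #{i : Fin N | (i : ℕ) < j ∧ g i = a} := by
  induction N generalizing j with
  | zero => simp
  | succ N ih =>
    rcases j with _ | j
    · simp
    · rw [List.ofFn_succ, List.take_succ_cons, List.count_cons, ih, Fin.card_filter_univ_succ']
      simp [add_comm]

namespace DyckWord

def returns (p : DyckWord) : ℕ :=
  #{j ∈ Icc 1 p.toList.length | (p.toList.take j).count U = (p.toList.take j).count D}

@[simp] lemma returns_zero : returns 0 = 0 := rfl

lemma returns_add (p q : DyckWord) : (p + q).returns = p.returns + q.returns := by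
  have hpq : (p + q).toList = p.toList ++ q.toList := rfl
  simp only [returns, Nat.card_filter_Icc_one_eq_count, hpq, List.length_append, Nat.count_add]
  congr 1 <;> refine Nat.count_congr_of_lt fun k hk => ?_
  · rw [List.take_append_of_le_length (by omega)]
  · rw [add_assoc, List.take_length_add_append, List.count_append, List.count_append,
      p.count_U_eq_count_D, Nat.add_left_cancel_iff]

lemma returns_nest (p : DyckWord) : p.nest.returns = 1 := by
  rw [returns, card_eq_one]
  refine ⟨p.nest.toList.length, Finset.ext fun j => ?_⟩
  simp only [mem_filter, mem_Icc, mem_singleton]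
  constructor
  · rintro ⟨⟨hj, hj'⟩, hbal⟩
    by_contra hne
    exact (IsNested.nest.2 (by omega) (by omega)).ne' hbal
  · rintro rfl
    refine ⟨⟨List.length_pos_iff.mpr (toList_ne_nil.mpr nest_ne_zero), le_rfl⟩, ?_⟩
    rw [List.take_length, count_U_eq_count_D]

lemma returns_nest_add (p q : DyckWord) : (p.nest + q).returns = q.returns + 1 := by
  rw [returns_add, returns_nest, add_comm]

lemma returns_eq_returns_outsidePart_add_one {p : DyckWord} (hp : p ≠ 0) :
    p.returns = p.outsidePart.returns + 1 := by
  conv_lhs => rw [← nest_insidePart_add_outsidePart hp]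
  exact returns_nest_add _ _

lemma returns_eq_zero_iff {p : DyckWord} : p.returns = 0 ↔ p = 0 := by
  refine ⟨fun h => ?_, fun h => h ▸ returns_zero⟩
  by_contra hp
  rw [returns_eq_returns_outsidePart_add_one hp] at h
  omega

lemma ne_zero_of_insidePart_ne_zero {p : DyckWord} (hp : p.insidePart ≠ 0) : p ≠ 0 := by
  rintro rfl
  exact hp insidePart_zero

/-- `(a.nest + b).nest + c ↦ a.nest + (b.nest + c)`. -/
def splitFirstArch (p : DyckWord) : DyckWord :=
  p.insidePart.insidePart.nest + (p.insidePart.outsidePart.nest + p.outsidePart)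

def mergeFirstArches (v : DyckWord) : DyckWord :=
  (v.insidePart.nest + v.outsidePart.insidePart).nest + v.outsidePart.outsidePart

lemma insidePart_mergeFirstArches_ne_zero (v : DyckWord) : v.mergeFirstArches.insidePart ≠ 0 := by
  rw [mergeFirstArches, insidePart_add nest_ne_zero, insidePart_nest]
  exact fun h => nest_ne_zero (add_eq_zero'.mp h).1

lemma mergeFirstArches_splitFirstArch {p : DyckWord} (hp : p.insidePart ≠ 0) :
    p.splitFirstArch.mergeFirstArches = p := by
  have hp₀ := ne_zero_of_insidePart_ne_zero hp
  simp only [splitFirstArch, mergeFirstArches, insidePart_add nest_ne_zero, insidePart_nest,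
    outsidePart_add nest_ne_zero, outsidePart_nest, zero_add,
    nest_insidePart_add_outsidePart hp, nest_insidePart_add_outsidePart hp₀]

lemma splitFirstArch_mergeFirstArches_of_two_le_returns {v : DyckWord} (hv : 2 ≤ v.returns) :
    v.mergeFirstArches.splitFirstArch = v := by
  have hv₀ : v ≠ 0 := by rintro rfl; simp at hv
  have hv' : v.outsidePart ≠ 0 := by
    rw [← returns_eq_zero_iff.ne, ← Nat.pos_iff_ne_zero]
    have := returns_eq_returns_outsidePart_add_one hv₀
    omega
  simp only [splitFirstArch, mergeFirstArches, insidePart_add nest_ne_zero, insidePart_nest,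
    outsidePart_add nest_ne_zero, outsidePart_nest, zero_add,
    nest_insidePart_add_outsidePart hv', nest_insidePart_add_outsidePart hv₀]

lemma semilength_splitFirstArch {p : DyckWord} (hp : p.insidePart ≠ 0) :
    p.splitFirstArch.semilength = p.semilength := by
  have hp₀ := ne_zero_of_insidePart_ne_zero hp
  have h := semilength_insidePart_add_semilength_outsidePart_add_one hp₀
  have h' := semilength_insidePart_add_semilength_outsidePart_add_one hp
  simp only [splitFirstArch, semilength_add, semilength_nest]
  omega

lemma returns_splitFirstArch {p : DyckWord} (hp : p ≠ 0) :
    p.splitFirstArch.returns = p.returns + 1 := by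
  rw [splitFirstArch, returns_nest_add, returns_nest_add, returns_eq_returns_outsidePart_add_one hp]

lemma nest_insidePart_of_returns_eq_one {p : DyckWord} (hp : p.returns = 1) :
    p.insidePart.nest = p := by
  have hp₀ : p ≠ 0 := by rintro rfl; simp at hp
  have hout : p.outsidePart = 0 := by
    rw [← returns_eq_zero_iff]
    have := returns_eq_returns_outsidePart_add_one hp₀
    omega
  conv_rhs => rw [← nest_insidePart_add_outsidePart hp₀, hout, add_zero]

noncomputable def countWithReturns (m n : ℕ) : ℕ :=
  Nat.card {p : DyckWord // p.semilength = m ∧ p.returns = n}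

instance (m n : ℕ) : Finite {p : DyckWord // p.semilength = m ∧ p.returns = n} :=
  Finite.of_injective _
    (Subtype.impEmbedding _ (fun p => p.semilength = m) fun _ h => h.1).injective

lemma countWithReturns_succ_zero (m : ℕ) : countWithReturns (m + 1) 0 = 0 := by
  rw [countWithReturns, Nat.card_eq_zero]
  left
  constructor
  rintro ⟨p, hsl, hret⟩
  rw [returns_eq_zero_iff.mp hret, semilength_zero] at hsl
  omega

def equivSemilengthOfReturnsEqOne (m : ℕ) :
    {p : DyckWord // p.semilength = m + 1 ∧ p.returns = 1} ≃
      {q : DyckWord // q.semilength = m} where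
  toFun p := ⟨p.1.insidePart, by
    have := congrArg semilength (nest_insidePart_of_returns_eq_one p.2.2)
    rw [semilength_nest, p.2.1] at this
    omega⟩
  invFun q := ⟨q.1.nest, by rw [semilength_nest, q.2], returns_nest _⟩
  left_inv p := Subtype.ext (nest_insidePart_of_returns_eq_one p.2.2)
  right_inv q := Subtype.ext insidePart_nest

lemma countWithReturns_succ_one (m : ℕ) : countWithReturns (m + 1) 1 = catalan m := by
  rw [countWithReturns, Nat.card_congr (equivSemilengthOfReturnsEqOne m), Nat.card_eq_fintype_card,
    card_dyckWord_semilength_eq_catalan]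

def equivOfInsidePartEqZero (m n : ℕ) :
    {x : {p : DyckWord // p.semilength = m + 1 ∧ p.returns = n + 1} // x.1.insidePart = 0} ≃
      {q : DyckWord // q.semilength = m ∧ q.returns = n} where
  toFun x := ⟨x.1.1.outsidePart, by
    obtain ⟨⟨p, hsl, hret⟩, hin⟩ := x
    have hp : p ≠ 0 := by rintro rfl; simp at hret
    have h := semilength_insidePart_add_semilength_outsidePart_add_one hp
    have h' := returns_eq_returns_outsidePart_add_one hp
    simp only [hin, semilength_zero] at h ⊢
    omega⟩
  invFun q := ⟨⟨nest 0 + q.1, by simp [returns_nest_add, q.2, add_comm]⟩, by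
    simp only [insidePart_add nest_ne_zero, insidePart_nest]⟩
  left_inv x := by
    obtain ⟨⟨p, hsl, hret⟩, hin⟩ := x
    have hp : p ≠ 0 := by rintro rfl; simp at hret
    refine Subtype.ext (Subtype.ext ?_)
    dsimp only at hin ⊢
    conv_rhs => rw [← nest_insidePart_add_outsidePart hp, hin]
  right_inv q := Subtype.ext (by
    simp only [outsidePart_add nest_ne_zero, outsidePart_nest, zero_add])

def equivOfInsidePartNeZero (m n : ℕ) :
    {x : {p : DyckWord // p.semilength = m + 1 ∧ p.returns = n + 1} // x.1.insidePart ≠ 0} ≃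
      {v : DyckWord // v.semilength = m + 1 ∧ v.returns = n + 2} where
  toFun x := ⟨x.1.1.splitFirstArch, by
    rw [semilength_splitFirstArch x.2, returns_splitFirstArch (ne_zero_of_insidePart_ne_zero x.2),
      x.1.2.1, x.1.2.2]
    exact ⟨rfl, rfl⟩⟩
  invFun v := ⟨⟨v.1.mergeFirstArches, by
    have hsplit := splitFirstArch_mergeFirstArches_of_two_le_returns (by rw [v.2.2]; omega)
    have hsl := semilength_splitFirstArch (insidePart_mergeFirstArches_ne_zero v.1)
    have hret := returns_splitFirstArch
      (ne_zero_of_insidePart_ne_zero (insidePart_mergeFirstArches_ne_zero v.1))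
    rw [hsplit, v.2.1] at hsl
    rw [hsplit, v.2.2] at hret
    exact ⟨hsl.symm, by omega⟩⟩, insidePart_mergeFirstArches_ne_zero v.1⟩
  left_inv x := Subtype.ext (Subtype.ext (mergeFirstArches_splitFirstArch x.2))
  right_inv v := Subtype.ext (splitFirstArch_mergeFirstArches_of_two_le_returns
    (by rw [v.2.2]; omega))

lemma countWithReturns_succ_succ (m n : ℕ) :
    countWithReturns (m + 1) (n + 1) = countWithReturns m n + countWithReturns (m + 1) (n + 2) := by
  simp only [countWithReturns]
  rw [← Nat.card_congr (equivOfInsidePartEqZero m n),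
    ← Nat.card_congr (equivOfInsidePartNeZero m n), ← Nat.card_sum,
    Nat.card_congr (Equiv.sumCompl _)]

end DyckWord

def catalanAltTerm (m n i : ℕ) : ℤ :=
  (-1 : ℤ) ^ i * (Nat.choose (n - i - 1) i) * (catalan (m - i - 1))

def catalanAltSum (m n : ℕ) : ℤ :=
  ∑ i ∈ range m, catalanAltTerm m n i

lemma catalanAltSum_succ_one (m : ℕ) : catalanAltSum (m + 1) 1 = catalan m := by
  simp [catalanAltSum, catalanAltTerm, sum_range_succ']

lemma catalanAltSum_two (m : ℕ) : catalanAltSum m 2 = catalanAltSum m 1 := by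
  refine sum_congr rfl fun i _ => ?_
  rcases i with _ | i <;> simp [catalanAltTerm]

lemma catalanAltTerm_succ_add_three (m k i : ℕ) :
    catalanAltTerm (m + 1) (k + 3) (i + 1) =
      catalanAltTerm (m + 1) (k + 2) (i + 1) - catalanAltTerm m (k + 1) i := by
  rw [catalanAltTerm, catalanAltTerm, catalanAltTerm, show k + 3 - (i + 1) - 1 = k + 1 - i by omega,
    show k + 2 - (i + 1) - 1 = k - i by omega, show k + 1 - i - 1 = k - i by omega,
    show m + 1 - (i + 1) - 1 = m - i - 1 by omega, Nat.choose_succ_sub_succ]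
  push_cast
  ring

lemma catalanAltSum_succ_add_three (m k : ℕ) :
    catalanAltSum (m + 1) (k + 3) = catalanAltSum (m + 1) (k + 2) - catalanAltSum m (k + 1) := by
  simp only [catalanAltSum, sum_range_succ' _ m, catalanAltTerm_succ_add_three, sum_sub_distrib]
  simp only [catalanAltTerm, pow_zero, Nat.choose_zero_right]
  ring

open DyckWord in
theorem countWithReturns_eq_catalanAltSum :
    ∀ {m n : ℕ}, 1 ≤ n → n ≤ m → (countWithReturns m n : ℤ) = catalanAltSum m n
  | m + 1, 1, _, _ => by rw [countWithReturns_succ_one, catalanAltSum_succ_one]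
  | m + 1 + 1, 2, _, _ => by
    have h := countWithReturns_succ_succ (m + 1) 0
    rw [countWithReturns_succ_zero, countWithReturns_succ_one] at h
    rw [catalanAltSum_two, catalanAltSum_succ_one, h, zero_add]
  | m + 1, k + 3, _, hkm => by
    have ih₁ := countWithReturns_eq_catalanAltSum (m := m + 1) (n := k + 2) (by omega) (by omega)
    have ih₂ := countWithReturns_eq_catalanAltSum (m := m) (n := k + 1) (by omega) (by omega)
    rw [catalanAltSum_succ_add_three, ← ih₁, ← ih₂, countWithReturns_succ_succ m (k + 1)]
    push_cast
    ring
  | _, 0, h, _ | 0, _ + 1, _, h | 1, 2, _, h => by omega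

def fin2EquivDyckStep : Fin 2 ≃ DyckStep where
  toFun := ![U, D]
  invFun | U => 0 | D => 1
  left_inv := by decide
  right_inv s := by cases s <;> rfl

def dyckSteps {N : ℕ} (ε : Fin N → Fin 2) : List DyckStep :=
  List.ofFn (fin2EquivDyckStep ∘ ε)

@[simp] lemma length_dyckSteps {N : ℕ} (ε : Fin N → Fin 2) : (dyckSteps ε).length = N :=
  List.length_ofFn

lemma D2_eq_count_sub_count {N : ℕ} (ε : Fin N → Fin 2) (j : ℕ) :
    D2 ε j = ((dyckSteps ε).take j).count U - ((dyckSteps ε).take j).count D := by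
  simp only [D2, dyckSteps, List.count_take_ofFn, Function.comp_apply, ← Equiv.eq_symm_apply]
  rfl

lemma card_filter_D2_eq_zero_s16 {N : ℕ} (ε : Fin N → Fin 2) {p : DyckWord}
    (hp : dyckSteps ε = p.toList) : #{j ∈ Icc 1 N | D2 ε j = 0} = p.returns := by
  rw [DyckWord.returns, ← hp, length_dyckSteps]
  refine congrArg card (filter_congr fun j _ => ?_)
  rw [D2_eq_count_sub_count, sub_eq_zero, Nat.cast_inj]

namespace DyckWord

lemma getElem_eq_D_of_count_take_succ_eq {p : DyckWord} {j : ℕ} (hj : j < p.toList.length)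
    (hbal : (p.toList.take (j + 1)).count U = (p.toList.take (j + 1)).count D) :
    p.toList[j] = D := by
  have hle := p.count_D_le_count_U j
  rw [List.take_succ_eq_append_getElem hj, List.count_append, List.count_append] at hbal
  cases h : p.toList[j]
  · simp [h] at hbal
    omega
  · rfl

def ofLeadingHump {m : ℕ} (ε : Fin (2 * m) → Fin 2) (hε : IsLeadingHump m ε) : DyckWord where
  toList := dyckSteps ε
  count_U_eq_count_D := by
    have h := D2_eq_count_sub_count ε (2 * m)
    rw [hε.2.1, List.take_of_length_le (by simp)] at h
    omega
  count_D_le_count_U i := by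
    rw [List.take_eq_take_min, length_dyckSteps]
    rcases Nat.eq_zero_or_pos (min i (2 * m)) with h0 | hpos
    · simp [h0]
    have h := hε.1 _ hpos (min_le_right _ _)
    rw [D2_eq_count_sub_count, sub_nonneg, Nat.cast_le] at h
    exact h

@[simp] lemma toList_ofLeadingHump {m : ℕ} (ε : Fin (2 * m) → Fin 2) (hε) :
    (ofLeadingHump ε hε).toList = dyckSteps ε := rfl

lemma semilength_ofLeadingHump {m : ℕ} (ε : Fin (2 * m) → Fin 2) (hε) :
    (ofLeadingHump ε hε).semilength = m := by
  have h := (ofLeadingHump ε hε).two_mul_semilength_eq_length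
  rw [toList_ofLeadingHump, length_dyckSteps] at h
  omega

lemma length_toList_of_semilength_eq {p : DyckWord} {m : ℕ} (hp : p.semilength = m) :
    p.toList.length = 2 * m := by
  rw [← two_mul_semilength_eq_length, hp]

def toBinary (p : DyckWord) {m : ℕ} (hp : p.semilength = m) : Fin (2 * m) → Fin 2 :=
  fun i => fin2EquivDyckStep.symm
    (p.toList[(i : ℕ)]'(by rw [length_toList_of_semilength_eq hp]; exact i.2))

lemma dyckSteps_toBinary (p : DyckWord) {m : ℕ} (hp : p.semilength = m) :
    dyckSteps (p.toBinary hp) = p.toList := by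
  refine List.ext_getElem (by simp [length_toList_of_semilength_eq hp]) fun i _ _ => ?_
  simp [dyckSteps, toBinary]

lemma isLeadingHump_toBinary (p : DyckWord) {m : ℕ} (hp : p.semilength = m) :
    IsLeadingHump m (p.toBinary hp) := by
  have hD2 := D2_eq_count_sub_count (p.toBinary hp)
  rw [dyckSteps_toBinary] at hD2
  refine ⟨fun j _ _ => ?_, ?_, fun j hj hjm hj0 => ?_⟩
  · rw [hD2, sub_nonneg, Nat.cast_le]
    exact p.count_D_le_count_U j
  · rw [hD2, List.take_of_length_le (length_toList_of_semilength_eq hp).le, p.count_U_eq_count_D,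
      sub_self]
  · obtain ⟨j, rfl⟩ := Nat.exists_eq_add_of_le' hj
    rw [hD2, sub_eq_zero, Nat.cast_inj] at hj0
    simp only [toBinary, Nat.add_sub_cancel, getElem_eq_D_of_count_take_succ_eq
      (by rw [length_toList_of_semilength_eq hp]; exact hjm) hj0]
    rfl

end DyckWord

lemma mem_H2 {m n : ℕ} {ε : Fin (2 * m) → Fin 2} :
    ε ∈ H2 m n ↔ IsLeadingHump m ε ∧ #{j ∈ Icc 1 (2 * m) | D2 ε j = 0} = n := by
  simp [H2]

def h2EquivDyckWords (m n : ℕ) :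
    H2 m n ≃ {p : DyckWord // p.semilength = m ∧ p.returns = n} where
  toFun ε := ⟨.ofLeadingHump ε.1 (mem_H2.mp ε.2).1, DyckWord.semilength_ofLeadingHump _ _,
    card_filter_D2_eq_zero_s16 _ (DyckWord.toList_ofLeadingHump _ _).symm ▸ (mem_H2.mp ε.2).2⟩
  invFun p := ⟨p.1.toBinary p.2.1, mem_H2.mpr ⟨p.1.isLeadingHump_toBinary p.2.1,
    (card_filter_D2_eq_zero_s16 _ (p.1.dyckSteps_toBinary p.2.1)).trans p.2.2⟩⟩
  left_inv ε := Subtype.ext (funext fun i => by simp [DyckWord.toBinary, dyckSteps])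
  right_inv p := Subtype.ext (DyckWord.ext (p.1.dyckSteps_toBinary p.2.1))

/-- For all `m ≥ n ≥ 1`,
`card(Ĥ²_{m,n}) = ∑_{i=0}^{m−1} (−1)^i binom(n−i−1, i) C_{m−i−1}`
(where `binom(a,b) = 0` if `b > a` or `a < 0`; here natural subtraction
realizes this convention). -/
theorem card_H2_formula (m n : ℕ) (hn : 1 ≤ n) (hnm : n ≤ m) :
    ((H2 m n).card : ℤ) =
      ∑ i ∈ Finset.range m,
        (-1 : ℤ) ^ i * (Nat.choose (n - i - 1) i) * (catalan (m - i - 1)) := by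
  rw [← Nat.card_eq_finsetCard, Nat.card_congr (h2EquivDyckWords m n)]
  exact countWithReturns_eq_catalanAltSum hn hnm
end
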